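/- arXiv:1712.06154 — 5 statements merged into one kernel-verified Lean document; each statement's English description precedes it below -/
import Mathlib

section
/- Let R be an involutive symmetry on V = ℂ^N, i.e. an invertible N²×N² complex matrix (acting on V⊗V) satisfying the braid relation R₁₂R₂₃R₁₂ = R₂₃R₁₂R₂₃ on V⊗V⊗V (where R₁₂ = R⊗I_N and R₂₃ = I_N⊗R are Kronecker products) and R² = I. Fix a ∈ ℂ and define the current R-matrix R(u,v) = R + (a/(u−v))·I for u ≠ v. Then for any pairwise distinct u, v, w ∈ ℂ the quantum Yang–Baxter equation with spectral parameters holds: R₁₂(u,v)·R₂₃(u,w)·R₁₂(v,w) = R₂₃(v,w)·R₁₂(u,w)·R₂₃(u,v). -/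
/-!
Write `A = R₁₂`, `B = R₂₃`; these are involutions satisfying the braid relation `ABA = BAB`.
Expanding `(A + α)(B + β)(A + γ)` and `(B + γ)(A + β)(B + α)` with `A² = B² = 1` and `ABA = BAB`,
the two sides differ by `(αβ + βγ - αγ)(A - B)`. For the rational weights `α = a/(u-v)`,
`β = a/(u-w)`, `γ = a/(v-w)` the coefficient vanishes, since `1/(u-v) + 1/(v-w) = (u-w)/((u-v)(v-w))`.
-/

open Matrix

/-- For an `N² × N²` matrix `X` acting on `V ⊗ V` (`V = ℂ^N`), `op12 X = X ⊗ I_N`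
acting on `V ⊗ V ⊗ V`. -/
def op12 {N : ℕ} (X : Matrix (Fin N × Fin N) (Fin N × Fin N) ℂ) :
    Matrix (Fin N × Fin N × Fin N) (Fin N × Fin N × Fin N) ℂ :=
  Matrix.of fun a b => X (a.1, a.2.1) (b.1, b.2.1) * (if a.2.2 = b.2.2 then 1 else 0)

/-- `op23 X = I_N ⊗ X` acting on `V ⊗ V ⊗ V`. -/
def op23 {N : ℕ} (X : Matrix (Fin N × Fin N) (Fin N × Fin N) ℂ) :
    Matrix (Fin N × Fin N × Fin N) (Fin N × Fin N × Fin N) ℂ :=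
  Matrix.of fun a b => (if a.1 = b.1 then 1 else 0) * X (a.2.1, a.2.2) (b.2.1, b.2.2)

open scoped Kronecker

theorem yangBaxter_add_smul_one_of_braid {K M : Type*} [CommRing K] [Ring M] [Algebra K M]
    {A B : M} (hA : A * A = 1) (hB : B * B = 1) (hAB : A * B * A = B * A * B)
    {α β γ : K} (h : α * γ = α * β + β * γ) :
    (A + α • 1) * (B + β • 1) * (A + γ • 1) = (B + γ • 1) * (A + β • 1) * (B + α • 1) := by
  simp only [mul_add, add_mul, smul_mul_assoc, mul_smul_comm, mul_one, one_mul, hA, hB, hAB]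
  linear_combination (norm := module) h • (B - A)

section Embeddings

variable {N : ℕ}

theorem op12_eq_reindex_kronecker (X : Matrix (Fin N × Fin N) (Fin N × Fin N) ℂ) :
    op12 X = reindexAlgEquiv ℂ ℂ (Equiv.prodAssoc _ _ _) (X ⊗ₖ 1) := by
  ext ⟨i, j, k⟩ ⟨l, m, n⟩
  simp [op12, one_apply]

theorem op23_eq_one_kronecker (X : Matrix (Fin N × Fin N) (Fin N × Fin N) ℂ) :
    op23 X = 1 ⊗ₖ X := by
  ext ⟨i, j⟩ ⟨k, l⟩
  simp [op23, one_apply]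

theorem op12_one : op12 (1 : Matrix (Fin N × Fin N) (Fin N × Fin N) ℂ) = 1 := by
  rw [op12_eq_reindex_kronecker, one_kronecker_one, map_one]

theorem op23_one : op23 (1 : Matrix (Fin N × Fin N) (Fin N × Fin N) ℂ) = 1 := by
  rw [op23_eq_one_kronecker, one_kronecker_one]

theorem op12_mul (X Y : Matrix (Fin N × Fin N) (Fin N × Fin N) ℂ) :
    op12 (X * Y) = op12 X * op12 Y := by
  simp only [op12_eq_reindex_kronecker, ← map_mul, ← mul_kronecker_mul, mul_one]

theorem op23_mul (X Y : Matrix (Fin N × Fin N) (Fin N × Fin N) ℂ) :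
    op23 (X * Y) = op23 X * op23 Y := by
  simp only [op23_eq_one_kronecker, ← mul_kronecker_mul, mul_one]

theorem op12_add_smul_one (X : Matrix (Fin N × Fin N) (Fin N × Fin N) ℂ) (c : ℂ) :
    op12 (X + c • 1) = op12 X + c • 1 := by
  simp only [op12_eq_reindex_kronecker, add_kronecker, smul_kronecker, one_kronecker_one,
    map_add, map_smul, map_one]

theorem op23_add_smul_one (X : Matrix (Fin N × Fin N) (Fin N × Fin N) ℂ) (c : ℂ) :
    op23 (X + c • 1) = op23 X + c • 1 := by
  simp only [op23_eq_one_kronecker, kronecker_add, kronecker_smul, one_kronecker_one]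

end Embeddings

theorem baxterization_involutive_general {N : ℕ}
    (R : Matrix (Fin N × Fin N) (Fin N × Fin N) ℂ)
    (hbraid : op12 R * op23 R * op12 R = op23 R * op12 R * op23 R)
    (hinvol : R * R = 1)
    (a : ℂ)
    (Rc : ℂ → ℂ → Matrix (Fin N × Fin N) (Fin N × Fin N) ℂ)
    (hRc : ∀ u v : ℂ, u ≠ v →
      Rc u v = R + (a / (u - v)) • (1 : Matrix (Fin N × Fin N) (Fin N × Fin N) ℂ))
    (u v w : ℂ) (huv : u ≠ v) (huw : u ≠ w) (hvw : v ≠ w) :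
    op12 (Rc u v) * op23 (Rc u w) * op12 (Rc v w) =
      op23 (Rc v w) * op12 (Rc u w) * op23 (Rc u v) := by
  have hweights : a / (u - v) * (a / (v - w)) =
      a / (u - v) * (a / (u - w)) + a / (u - w) * (a / (v - w)) := by
    have huv₀ := sub_ne_zero.mpr huv
    have huw₀ := sub_ne_zero.mpr huw
    have hvw₀ := sub_ne_zero.mpr hvw
    field_simp
    ring
  rw [hRc u v huv, hRc u w huw, hRc v w hvw]
  simp only [op12_add_smul_one, op23_add_smul_one]
  refine yangBaxter_add_smul_one_of_braid ?_ ?_ hbraid hweights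
  · rw [← op12_mul, hinvol, op12_one]
  · rw [← op23_mul, hinvol, op23_one]

/-- the Baxterized rational current `R`-matrix `R(u,v) = R + (a/(u-v))·I`
built from an involutive symmetry satisfies the quantum Yang–Baxter equation with
spectral parameters. -/
theorem baxterization_involutive {N : ℕ} (hN : 1 ≤ N)
    (R : Matrix (Fin N × Fin N) (Fin N × Fin N) ℂ)
    (hRinv : IsUnit R)
    (hbraid : op12 R * op23 R * op12 R = op23 R * op12 R * op23 R)
    (hinvol : R * R = 1)
    (a : ℂ)
    (Rc : ℂ → ℂ → Matrix (Fin N × Fin N) (Fin N × Fin N) ℂ)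
    (hRc : ∀ u v : ℂ, u ≠ v →
      Rc u v = R + (a / (u - v)) • (1 : Matrix (Fin N × Fin N) (Fin N × Fin N) ℂ))
    (u v w : ℂ) (huv : u ≠ v) (huw : u ≠ w) (hvw : v ≠ w) :
    op12 (Rc u v) * op23 (Rc u w) * op12 (Rc v w) =
      op23 (Rc v w) * op12 (Rc u w) * op23 (Rc u v) :=
  baxterization_involutive_general R hbraid hinvol a Rc hRc u v w huv huw hvw
end

section
/- Let R be a Hecke symmetry on V = ℂ^N, i.e. an invertible N²×N² complex matrix (acting on V⊗V) satisfying the braid relation R₁₂R₂₃R₁₂ = R₂₃R₁₂R₂₃ and the Hecke condition (R − qI)(R + q⁻¹I) = 0 for some q ∈ ℂ \ {0, 1, −1}. Define the current R-matrix R(u,v) = R − ((q−q⁻¹)u/(u−v))·I for u ≠ v. Then for any pairwise distinct u, v, w ∈ ℂ the quantum Yang–Baxter equation with spectral parameters holds: R₁₂(u,v)·R₂₃(u,w)·R₁₂(v,w) = R₂₃(v,w)·R₁₂(u,w)·R₂₃(u,v). -/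
/-!
Write `A = R₁₂`, `B = R₂₃` and `l = q - q⁻¹`. The Hecke condition says `A² = l A + 1` and
`B² = l B + 1`. Expanding `(A - a)(B - b)(A - c) - (B - c)(A - b)(B - a)` and using the braid
relation `ABA = BAB`, everything cancels except `(ac - b(a + c - l))(B - A)`. For the weights
`a = lu/(u-v)`, `b = lu/(u-w)`, `c = lv/(v-w)` of the current `R`-matrix, `ac = b(a + c - l)` is
an identity of rational functions.
-/

open Matrix

section YangBaxter

variable {K M : Type*} [CommRing K] [Ring M] [Algebra K M]

theorem mul_self_eq_of_quadratic_eq_zero {R : M} {x y : K}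
    (h : (R - x • 1) * (R + y • 1) = 0) : R * R = (x - y) • R + (x * y) • 1 := by
  rw [← sub_eq_zero, ← h]
  simp only [sub_mul, mul_add, smul_mul_assoc, mul_smul_comm, one_mul, mul_one]
  module

theorem yangBaxter_of_braid {A B : M} {l m a b c : K}
    (hbraid : A * B * A = B * A * B)
    (hA : A * A = l • A + m • 1) (hB : B * B = l • B + m • 1)
    (habc : a * c = b * (a + c - l)) :
    (A - a • 1) * (B - b • 1) * (A - c • 1) = (B - c • 1) * (A - b • 1) * (B - a • 1) := by
  rw [← sub_eq_zero]
  calc _ = (a * c - b * (a + c - l)) • (B - A) := by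
          simp only [sub_mul, mul_sub, smul_mul_assoc, mul_smul_comm, one_mul, mul_one]
          rw [hbraid, hA, hB]
          module
    _ = 0 := by rw [habc, sub_self, zero_smul]

end YangBaxter

theorem yangBaxter_weights_relation {K : Type*} [Field K] (l : K) {u v w : K}
    (huv : u ≠ v) (huw : u ≠ w) (hvw : v ≠ w) :
    l * u / (u - v) * (l * v / (v - w)) =
      l * u / (u - w) * (l * u / (u - v) + l * v / (v - w) - l) := by
  have := sub_ne_zero.mpr huv
  have := sub_ne_zero.mpr huw
  have := sub_ne_zero.mpr hvw
  field_simp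
  ring

def op12AlgHom (N : ℕ) :
    Matrix (Fin N × Fin N) (Fin N × Fin N) ℂ →ₐ[ℂ]
      Matrix (Fin N × Fin N × Fin N) (Fin N × Fin N × Fin N) ℂ :=
  (reindexAlgEquiv ℂ ℂ (Equiv.prodAssoc _ _ _)).toAlgHom.comp
    ((kroneckerAlgEquiv (Fin N × Fin N) (Fin N) ℂ).toAlgHom.comp Algebra.TensorProduct.includeLeft)

def op23AlgHom (N : ℕ) :
    Matrix (Fin N × Fin N) (Fin N × Fin N) ℂ →ₐ[ℂ]
      Matrix (Fin N × Fin N × Fin N) (Fin N × Fin N × Fin N) ℂ :=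
  (kroneckerAlgEquiv (Fin N) (Fin N × Fin N) ℂ).toAlgHom.comp
    Algebra.TensorProduct.includeRight

theorem op12AlgHom_apply {N : ℕ} (X : Matrix (Fin N × Fin N) (Fin N × Fin N) ℂ) :
    op12AlgHom N X = op12 X := by
  ext ⟨a₁, a₂, a₃⟩ ⟨b₁, b₂, b₃⟩
  simp [op12AlgHom, op12, one_apply]

theorem op23AlgHom_apply {N : ℕ} (X : Matrix (Fin N × Fin N) (Fin N × Fin N) ℂ) :
    op23AlgHom N X = op23 X := by
  ext ⟨a₁, a₂, a₃⟩ ⟨b₁, b₂, b₃⟩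
  simp [op23AlgHom, op23, one_apply]

theorem baxterization_hecke_general {N : ℕ}
    (R : Matrix (Fin N × Fin N) (Fin N × Fin N) ℂ)
    (hbraid : op12 R * op23 R * op12 R = op23 R * op12 R * op23 R)
    (q : ℂ)
    (hHecke : (R - q • (1 : Matrix (Fin N × Fin N) (Fin N × Fin N) ℂ)) *
      (R + q⁻¹ • (1 : Matrix (Fin N × Fin N) (Fin N × Fin N) ℂ)) = 0)
    (Rc : ℂ → ℂ → Matrix (Fin N × Fin N) (Fin N × Fin N) ℂ)
    (hRc : ∀ u v : ℂ, u ≠ v →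
      Rc u v = R - ((q - q⁻¹) * u / (u - v)) • (1 : Matrix (Fin N × Fin N) (Fin N × Fin N) ℂ))
    (u v w : ℂ) (huv : u ≠ v) (huw : u ≠ w) (hvw : v ≠ w) :
    op12 (Rc u v) * op23 (Rc u w) * op12 (Rc v w) =
      op23 (Rc v w) * op12 (Rc u w) * op23 (Rc u v) := by
  have hR := mul_self_eq_of_quadratic_eq_zero hHecke
  have hsq (f : Matrix (Fin N × Fin N) (Fin N × Fin N) ℂ →ₐ[ℂ]
      Matrix (Fin N × Fin N × Fin N) (Fin N × Fin N × Fin N) ℂ) :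
      f R * f R = (q - q⁻¹) • f R + (q * q⁻¹) • 1 := by
    rw [← map_mul, hR, map_add, map_smul, map_smul, map_one]
  have hRc_map (f : Matrix (Fin N × Fin N) (Fin N × Fin N) ℂ →ₐ[ℂ]
      Matrix (Fin N × Fin N × Fin N) (Fin N × Fin N × Fin N) ℂ) {x y : ℂ} (hxy : x ≠ y) :
      f (Rc x y) = f R - ((q - q⁻¹) * x / (x - y)) • 1 := by
    rw [hRc x y hxy, map_sub, map_smul, map_one]
  simp only [← op12AlgHom_apply, ← op23AlgHom_apply] at hbraid ⊢
  simp only [hRc_map _ huv, hRc_map _ huw, hRc_map _ hvw]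
  exact yangBaxter_of_braid hbraid (hsq _) (hsq _) (yangBaxter_weights_relation _ huv huw hvw)

/-- the Baxterized trigonometric current `R`-matrix
`R(u,v) = R − ((q−q⁻¹)u/(u−v))·I` built from a Hecke symmetry satisfies the quantum
Yang–Baxter equation with spectral parameters. -/
theorem baxterization_hecke {N : ℕ} (hN : 1 ≤ N)
    (R : Matrix (Fin N × Fin N) (Fin N × Fin N) ℂ)
    (hRinv : IsUnit R)
    (hbraid : op12 R * op23 R * op12 R = op23 R * op12 R * op23 R)
    (q : ℂ) (hq0 : q ≠ 0) (hq1 : q ≠ 1) (hqm1 : q ≠ -1)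
    (hHecke : (R - q • (1 : Matrix (Fin N × Fin N) (Fin N × Fin N) ℂ)) *
      (R + q⁻¹ • (1 : Matrix (Fin N × Fin N) (Fin N × Fin N) ℂ)) = 0)
    (Rc : ℂ → ℂ → Matrix (Fin N × Fin N) (Fin N × Fin N) ℂ)
    (hRc : ∀ u v : ℂ, u ≠ v →
      Rc u v = R - ((q - q⁻¹) * u / (u - v)) • (1 : Matrix (Fin N × Fin N) (Fin N × Fin N) ℂ))
    (u v w : ℂ) (huv : u ≠ v) (huw : u ≠ w) (hvw : v ≠ w) :
    op12 (Rc u v) * op23 (Rc u w) * op12 (Rc v w) =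
      op23 (Rc v w) * op12 (Rc u w) * op23 (Rc u v) :=
  baxterization_hecke_general R hbraid q hHecke Rc hRc u v w huv huw hvw
end

section
/- Let R be an invertible N²×N² complex matrix satisfying the braid relation R₁₂R₂₃R₁₂ = R₂₃R₁₂R₂₃, let 𝒜 be an associative unital ℂ-algebra, and let T⁺, T⁻, M be N×N matrices with entries in 𝒜 such that: (i) R·T₁⁺T₂⁺ = T₁⁺T₂⁺·R; (ii) R·T₁⁻T₂⁻ = T₁⁻T₂⁻·R; (iii) R·T₁⁺T₂⁻ = T₁⁻T₂⁺·R; and (iv) T⁻·M = M·T⁻ = I_N (entrywise matrix products over 𝒜). Then the matrix L = T⁺·M satisfies the reflection equation R·L₁·R·L₁ = L₁·R·L₁·R, where L₁ = L⊗I_N. -/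
open Matrix

/-- For an `N×N` matrix `X` with entries in `A`, `leg1 X = X ⊗ I_N` as an `N²×N²` matrix. -/
def leg1 {N : ℕ} {A : Type*} [Semiring A] (X : Matrix (Fin N) (Fin N) A) :
    Matrix (Fin N × Fin N) (Fin N × Fin N) A :=
  Matrix.of fun a b => X a.1 b.1 * (if a.2 = b.2 then 1 else 0)

/-- For an `N×N` matrix `X` with entries in `A`, `leg2 X = I_N ⊗ X` as an `N²×N²` matrix. -/
def leg2 {N : ℕ} {A : Type*} [Semiring A] (X : Matrix (Fin N) (Fin N) A) :
    Matrix (Fin N × Fin N) (Fin N × Fin N) A :=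
  Matrix.of fun a b => (if a.1 = b.1 then 1 else 0) * X a.2 b.2

/-- Embedding of a complex matrix into matrices over a `ℂ`-algebra `A`. -/
def emb {n : Type*} {A : Type*} [Semiring A] [Algebra ℂ A] (R : Matrix n n ℂ) :
    Matrix n n A :=
  R.map (algebraMap ℂ A)

/-!
Inverting `T⁻` in the mixed relation `R T₁⁺ T₂⁻ = T₁⁻ T₂⁺ R` gives the exchange rule
`M₁ R T₁⁺ = T₂⁺ R M₂`, and inverting the `T⁻T⁻` relation shows that `R` commutes with `M₂ M₁`.
In `R L₁ R L₁ = R T₁⁺ (M₁ R T₁⁺) M₁` the exchange rule produces `R T₁⁺ T₂⁺ R M₂ M₁`; the `T⁺T⁺`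
relation and the commutation move both copies of `R` outward, and the exchange rule read
backwards reassembles `L₁ R L₁ R`.
-/

section Monoid

variable {G : Type*} [Monoid G]

theorem units_inv_mul_mul_eq_mul_mul_inv {E p₁ p₂ : G} {u₁ u₂ : Gˣ}
    (h : E * (p₁ * u₂) = u₁ * p₂ * E) : ↑u₁⁻¹ * E * p₁ = p₂ * E * ↑u₂⁻¹ := by
  rw [mul_assoc, Units.inv_mul_eq_iff_eq_mul, ← mul_assoc, ← mul_assoc,
    Units.eq_mul_inv_iff_mul_eq, mul_assoc, h]

/-- The monoid form of the reflection equation: with `E = R`, `pᵢ = T⁺ᵢ`, `uᵢ = T⁻ᵢ`,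
the element `p₁ * u₁⁻¹` plays the role of `L₁`. -/
theorem reflection_eq_of_RTT {E p₁ p₂ : G} {u₁ u₂ : Gˣ}
    (hpp : E * (p₁ * p₂) = p₁ * p₂ * E) (huu : E * (u₁ * u₂ : G) = u₁ * u₂ * E)
    (hpu : E * (p₁ * u₂) = u₁ * p₂ * E) :
    E * (p₁ * ↑u₁⁻¹) * E * (p₁ * ↑u₁⁻¹) = p₁ * ↑u₁⁻¹ * E * (p₁ * ↑u₁⁻¹) * E := by
  have hswap := units_inv_mul_mul_eq_mul_mul_inv hpu
  have hinv : E * (↑u₂⁻¹ * ↑u₁⁻¹) = ↑u₂⁻¹ * ↑u₁⁻¹ * E := by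
    have : Commute E ↑(u₁ * u₂)⁻¹ := Commute.units_inv_right (by rw [Units.val_mul]; exact huu)
    simpa only [_root_.mul_inv_rev, Units.val_mul] using this.eq
  calc E * (p₁ * ↑u₁⁻¹) * E * (p₁ * ↑u₁⁻¹)
      = E * p₁ * (↑u₁⁻¹ * E * p₁) * ↑u₁⁻¹ := by simp only [mul_assoc]
    _ = E * (p₁ * p₂) * E * (↑u₂⁻¹ * ↑u₁⁻¹) := by rw [hswap]; simp only [mul_assoc]
    _ = p₁ * p₂ * E * (E * (↑u₂⁻¹ * ↑u₁⁻¹)) := by rw [hpp]; simp only [mul_assoc]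
    _ = p₁ * (p₂ * E * ↑u₂⁻¹) * ↑u₁⁻¹ * E := by rw [hinv]; simp only [mul_assoc]
    _ = p₁ * ↑u₁⁻¹ * E * (p₁ * ↑u₁⁻¹) * E := by rw [← hswap]; simp only [mul_assoc]

end Monoid

section Legs

variable {N : ℕ} {A : Type*} [Semiring A]

lemma leg1_mul (X Y : Matrix (Fin N) (Fin N) A) : leg1 (X * Y) = leg1 X * leg1 Y := by
  ext a b
  simp [leg1, Matrix.mul_apply, Fintype.sum_prod_type, mul_ite, ite_mul]

lemma leg2_mul (X Y : Matrix (Fin N) (Fin N) A) : leg2 (X * Y) = leg2 X * leg2 Y := by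
  ext a b
  simp [leg2, Matrix.mul_apply, Fintype.sum_prod_type, mul_ite, ite_mul, Finset.mul_sum]

lemma leg1_one : leg1 (1 : Matrix (Fin N) (Fin N) A) = 1 := by
  ext a b
  simp only [leg1, Matrix.of_apply, Matrix.one_apply, Prod.ext_iff, ite_and, ite_mul, one_mul,
    zero_mul]

lemma leg2_one : leg2 (1 : Matrix (Fin N) (Fin N) A) = 1 := by
  ext a b
  simp only [leg2, Matrix.of_apply, Matrix.one_apply, Prod.ext_iff, ite_and, mul_ite, mul_one,
    mul_zero]
  split_ifs <;> rfl

end Legs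

theorem reflection_from_double_RTT_general {N : ℕ} {A : Type*} [Ring A] [Algebra ℂ A]
    (R : Matrix (Fin N × Fin N) (Fin N × Fin N) ℂ)
    (Tp Tm M : Matrix (Fin N) (Fin N) A)
    (h1 : (emb R : Matrix (Fin N × Fin N) (Fin N × Fin N) A) * (leg1 Tp * leg2 Tp) =
      (leg1 Tp * leg2 Tp) * emb R)
    (h2 : (emb R : Matrix (Fin N × Fin N) (Fin N × Fin N) A) * (leg1 Tm * leg2 Tm) =
      (leg1 Tm * leg2 Tm) * emb R)
    (h3 : (emb R : Matrix (Fin N × Fin N) (Fin N × Fin N) A) * (leg1 Tp * leg2 Tm) =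
      (leg1 Tm * leg2 Tp) * emb R)
    (h4 : Tm * M = 1) (h5 : M * Tm = 1) :
    emb R * leg1 (Tp * M) * emb R * leg1 (Tp * M) =
      leg1 (Tp * M) * emb R * leg1 (Tp * M) * emb R := by
  let Tm₁ : (Matrix (Fin N × Fin N) (Fin N × Fin N) A)ˣ :=
    ⟨leg1 Tm, leg1 M, by rw [← leg1_mul, h4, leg1_one], by rw [← leg1_mul, h5, leg1_one]⟩
  let Tm₂ : (Matrix (Fin N × Fin N) (Fin N × Fin N) A)ˣ :=
    ⟨leg2 Tm, leg2 M, by rw [← leg2_mul, h4, leg2_one], by rw [← leg2_mul, h5, leg2_one]⟩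
  rw [leg1_mul]
  exact reflection_eq_of_RTT (u₁ := Tm₁) (u₂ := Tm₂) h1 h2 h3

/-- from a couple of RTT algebras with generating matrices `T⁺, T⁻`
(and `M` a two-sided inverse of `T⁻`), the matrix `L = T⁺·M` satisfies the reflection
equation `R·L₁·R·L₁ = L₁·R·L₁·R`. -/
theorem reflection_from_double_RTT {N : ℕ} {A : Type*} [Ring A] [Algebra ℂ A]
    (R : Matrix (Fin N × Fin N) (Fin N × Fin N) ℂ)
    (hRinv : IsUnit R)
    (hbraid : op12 R * op23 R * op12 R = op23 R * op12 R * op23 R)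
    (Tp Tm M : Matrix (Fin N) (Fin N) A)
    (h1 : (emb R : Matrix (Fin N × Fin N) (Fin N × Fin N) A) * (leg1 Tp * leg2 Tp) =
      (leg1 Tp * leg2 Tp) * emb R)
    (h2 : (emb R : Matrix (Fin N × Fin N) (Fin N × Fin N) A) * (leg1 Tm * leg2 Tm) =
      (leg1 Tm * leg2 Tm) * emb R)
    (h3 : (emb R : Matrix (Fin N × Fin N) (Fin N × Fin N) A) * (leg1 Tp * leg2 Tm) =
      (leg1 Tm * leg2 Tp) * emb R)
    (h4 : Tm * M = 1) (h5 : M * Tm = 1) :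
    emb R * leg1 (Tp * M) * emb R * leg1 (Tp * M) =
      leg1 (Tp * M) * emb R * leg1 (Tp * M) * emb R :=
  reflection_from_double_RTT_general R Tp Tm M h1 h2 h3 h4 h5
end

section
/- Let R be a Hecke symmetry on ℂ^N with parameter q ∈ ℂ \ {0,1,−1}, 𝒜 an associative unital ℂ-algebra, and C a fixed N×N complex matrix satisfying: (i) Tr_{R(2)} R₁₂ = I_N; (ii) Tr_R I_N = α; (iii) for every N×N matrix A over 𝒜, Tr_{R(2)}(R₁₂·A₁·R₁₂⁻¹) = (Tr_R A)·I_N = Tr_{R(2)}(R₁₂⁻¹·A₁·R₁₂). Let g₁, g₂, g₃, g₄ ∈ ℂ satisfy (q−q⁻¹) + g₁ + g₂ + α·g₁g₂ = 0 and (q−q⁻¹) + g₃ + g₄ + α·g₃g₄ = 0. If N×N matrices K, L over 𝒜 satisfy the generalized reflection equation (R + g₁I)·K₁·(R + g₂I)·L₁ = L₁·(R + g₃I)·K₁·(R + g₄I), then (Tr_R K)·L = L·(Tr_R K). -/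
open Matrix

/-- The `R`-trace: `Tr_R X = Σ_{i,j} C^i_j X^j_i`. -/
def trR {N : ℕ} {A : Type*} [Ring A] [Algebra ℂ A]
    (C : Matrix (Fin N) (Fin N) ℂ) (X : Matrix (Fin N) (Fin N) A) : A :=
  ∑ i, ∑ j, C i j • X j i

/-- The partial `R`-trace over the second factor. -/
def trR2 {N : ℕ} {A : Type*} [Ring A] [Algebra ℂ A]
    (C : Matrix (Fin N) (Fin N) ℂ) (M : Matrix (Fin N × Fin N) (Fin N × Fin N) A) :
    Matrix (Fin N) (Fin N) A :=
  Matrix.of fun r s => ∑ a, ∑ b, C a b • M (r, b) (s, a)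


/-!
Applying the partial trace `Tr_{R(2)}` to both sides of the reflection equation pulls `L₁` out as
`L`, leaving `Tr_{R(2)}((R + g I) K₁ (R + h I))` on each side. The Hecke relation gives
`R⁻¹ = R - (q - q⁻¹) I`, so this trace splits into those of `R K₁ R⁻¹`, `R K₁`, `K₁ R` and `K₁`,
which are `(Tr_R K) I`, `K`, `K` and `α K` by (iii), (i) and (ii). Altogether it is
`(Tr_R K) I + ((q - q⁻¹) + g + h + α g h) K = (Tr_R K) I`, hence `(Tr_R K) L = L (Tr_R K)`.
-/

section Embedding

variable {n : Type*} [Fintype n] [DecidableEq n] {A : Type*} [Semiring A] [Algebra ℂ A]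

lemma emb_eq_mapMatrix (M : Matrix n n ℂ) :
    (emb M : Matrix n n A) = (Algebra.ofId ℂ A).mapMatrix M :=
  rfl

lemma emb_one : (emb (1 : Matrix n n ℂ) : Matrix n n A) = 1 := by
  rw [emb_eq_mapMatrix, map_one]

lemma emb_add_smul_one (M : Matrix n n ℂ) (g : ℂ) :
    (emb (M + g • 1) : Matrix n n A) = emb M + g • 1 := by
  rw [emb_eq_mapMatrix, map_add, map_smul, map_one, emb_eq_mapMatrix]

end Embedding

lemma Matrix.inv_eq_sub_smul_one_of_hecke {n K : Type*} [Fintype n] [DecidableEq n] [Field K]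
    {q : K} (hq : q ≠ 0) {R : Matrix n n K} (h : (R - q • 1) * (R + q⁻¹ • 1) = 0) :
    R⁻¹ = R - (q - q⁻¹) • 1 := by
  apply Matrix.inv_eq_right_inv
  have expand : R * (R - (q - q⁻¹) • 1) = (R - q • 1) * (R + q⁻¹ • 1) + 1 := by
    simp only [mul_sub, sub_mul, mul_add, smul_mul_assoc, mul_smul_comm, mul_one, one_mul]
    match_scalars <;> field_simp <;> ring
  rw [expand, h, zero_add]

section PartialTrace

variable {N : ℕ} {A : Type*} [Ring A] [Algebra ℂ A] (C : Matrix (Fin N) (Fin N) ℂ)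

lemma trR2_add (M P : Matrix (Fin N × Fin N) (Fin N × Fin N) A) :
    trR2 C (M + P) = trR2 C M + trR2 C P := by
  ext r s
  simp [trR2, smul_add, Finset.sum_add_distrib]

lemma trR2_smul (z : ℂ) (M : Matrix (Fin N × Fin N) (Fin N × Fin N) A) :
    trR2 C (z • M) = z • trR2 C M := by
  ext r s
  simp [trR2, Finset.smul_sum, smul_comm z]

lemma trR2_mul_leg1 (M : Matrix (Fin N × Fin N) (Fin N × Fin N) A)
    (L : Matrix (Fin N) (Fin N) A) :
    trR2 C (M * leg1 L) = trR2 C M * L := by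
  ext r s
  simp only [trR2, Matrix.of_apply, Matrix.mul_apply, leg1, Fintype.sum_prod_type,
    mul_ite, mul_one, mul_zero, Finset.sum_ite_eq', Finset.mem_univ, if_true,
    Finset.smul_sum, Finset.sum_mul, smul_mul_assoc]
  exact Finset.sum_comm_cycle

lemma trR2_leg1_mul (M : Matrix (Fin N × Fin N) (Fin N × Fin N) A)
    (L : Matrix (Fin N) (Fin N) A) :
    trR2 C (leg1 L * M) = L * trR2 C M := by
  ext r s
  simp only [trR2, Matrix.of_apply, Matrix.mul_apply, leg1, Fintype.sum_prod_type,
    ite_mul, zero_mul, mul_ite, mul_one, mul_zero, Finset.sum_ite_eq, Finset.mem_univ, if_true,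
    Finset.smul_sum, Finset.mul_sum, mul_smul_comm]
  exact Finset.sum_comm_cycle

lemma trR2_leg1 (K : Matrix (Fin N) (Fin N) A) :
    trR2 C (leg1 K) = trR C (1 : Matrix (Fin N) (Fin N) ℂ) • K := by
  ext r s
  simp [trR2, trR, leg1, Matrix.one_apply, Finset.sum_smul]

lemma trR2_emb_mul_leg1 (S : Matrix (Fin N × Fin N) (Fin N × Fin N) ℂ)
    (K : Matrix (Fin N) (Fin N) A) :
    trR2 C (emb S * leg1 K) = emb (trR2 C S) * K := by
  ext r s
  simp only [trR2, emb, leg1, mul_ite, mul_one, mul_zero, Matrix.mul_apply, map_apply,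
    Algebra.algebraMap_eq_smul_one, of_apply, Algebra.smul_mul_assoc, one_mul, Fintype.sum_prod_type,
    Finset.sum_ite_eq', Finset.mem_univ, ↓reduceIte, Finset.smul_sum, smul_smul, smul_eq_mul, map_sum,
    Finset.sum_mul]
  exact Finset.sum_comm_cycle

lemma trR2_leg1_mul_emb (S : Matrix (Fin N × Fin N) (Fin N × Fin N) ℂ)
    (K : Matrix (Fin N) (Fin N) A) :
    trR2 C (leg1 K * emb S) = K * emb (trR2 C S) := by
  ext r s
  simp only [trR2, leg1, mul_ite, mul_one, mul_zero, emb, Matrix.mul_apply, of_apply, map_apply,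
    Algebra.algebraMap_eq_smul_one, Algebra.mul_smul_comm, smul_ite, smul_zero, Fintype.sum_prod_type,
    Finset.sum_ite_eq, Finset.mem_univ, ↓reduceIte, Finset.smul_sum, smul_smul, smul_eq_mul, map_sum,
    Finset.mul_sum]
  exact Finset.sum_comm_cycle

lemma trR2_emb_mul_leg1_of_trR2_eq_one {S : Matrix (Fin N × Fin N) (Fin N × Fin N) ℂ}
    (hS : trR2 C S = 1) (K : Matrix (Fin N) (Fin N) A) : trR2 C (emb S * leg1 K) = K := by
  rw [trR2_emb_mul_leg1, hS, emb_one, one_mul]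

lemma trR2_leg1_mul_emb_of_trR2_eq_one {S : Matrix (Fin N × Fin N) (Fin N × Fin N) ℂ}
    (hS : trR2 C S = 1) (K : Matrix (Fin N) (Fin N) A) : trR2 C (leg1 K * emb S) = K := by
  rw [trR2_leg1_mul_emb, hS, emb_one, mul_one]

end PartialTrace

section Sandwich

variable {N : ℕ} {A : Type*} [Ring A] [Algebra ℂ A] {C : Matrix (Fin N) (Fin N) ℂ}
  {R : Matrix (Fin N × Fin N) (Fin N × Fin N) ℂ} {c : ℂ}

lemma trR2_emb_mul_leg1_mul_emb_self (hR : trR2 C R = 1) (hinv : R⁻¹ = R - c • 1)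
    (hconj : ∀ X : Matrix (Fin N) (Fin N) A, trR2 C (emb R * leg1 X * emb R⁻¹) = trR C X • 1)
    (K : Matrix (Fin N) (Fin N) A) :
    trR2 C (emb R * leg1 K * emb R) = trR C K • 1 + c • K := by
  have hsplit : (emb R : Matrix (Fin N × Fin N) (Fin N × Fin N) A) = emb R⁻¹ + c • 1 := by
    rw [← emb_add_smul_one, hinv, sub_add_cancel]
  nth_rewrite 2 [hsplit]
  rw [mul_add, mul_smul_comm, mul_one, trR2_add, trR2_smul, hconj, trR2_emb_mul_leg1_of_trR2_eq_one C hR]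

lemma trR2_emb_add_smul_mul_leg1_mul_emb_add_smul (hR : trR2 C R = 1) (hinv : R⁻¹ = R - c • 1)
    (hconj : ∀ X : Matrix (Fin N) (Fin N) A, trR2 C (emb R * leg1 X * emb R⁻¹) = trR C X • 1)
    (g h : ℂ) (K : Matrix (Fin N) (Fin N) A) :
    trR2 C (emb (R + g • 1) * leg1 K * emb (R + h • 1)) =
      trR C K • 1 + (c + g + h + trR C (1 : Matrix (Fin N) (Fin N) ℂ) * (g * h)) • K := by
  have expand : (emb (R + g • 1) : Matrix (Fin N × Fin N) (Fin N × Fin N) A) * leg1 K *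
      emb (R + h • 1) = emb R * leg1 K * emb R + h • (emb R * leg1 K) + g • (leg1 K * emb R)
        + (g * h) • leg1 K := by
    simp only [emb_add_smul_one, add_mul, mul_add, smul_mul_assoc, mul_smul_comm, one_mul,
      mul_one]
    module
  rw [expand, trR2_add, trR2_add, trR2_add, trR2_smul, trR2_smul, trR2_smul,
    trR2_emb_mul_leg1_mul_emb_self hR hinv hconj, trR2_emb_mul_leg1_of_trR2_eq_one C hR,
    trR2_leg1_mul_emb_of_trR2_eq_one C hR, trR2_leg1, smul_smul, add_smul, add_smul, add_smul,
    mul_comm (trR C _)]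
  abel

end Sandwich

theorem first_power_sum_central_of_sum_conditions_general {N : ℕ} {A : Type*} [Ring A] [Algebra ℂ A]
    (q : ℂ) (hq0 : q ≠ 0)
    (R : Matrix (Fin N × Fin N) (Fin N × Fin N) ℂ)
    (hHecke : (R - q • (1 : Matrix (Fin N × Fin N) (Fin N × Fin N) ℂ)) *
      (R + q⁻¹ • (1 : Matrix (Fin N × Fin N) (Fin N × Fin N) ℂ)) = 0)
    (C : Matrix (Fin N) (Fin N) ℂ) (α : ℂ)
    (hi : trR2 C R = (1 : Matrix (Fin N) (Fin N) ℂ))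
    (hii : trR C (1 : Matrix (Fin N) (Fin N) ℂ) = α)
    (hiii1 : ∀ X : Matrix (Fin N) (Fin N) A,
      trR2 C (emb R * leg1 X * emb R⁻¹) = trR C X • (1 : Matrix (Fin N) (Fin N) A))
    (g₁ g₂ g₃ g₄ : ℂ)
    (hsum1 : (q - q⁻¹) + g₁ + g₂ + α * (g₁ * g₂) = 0)
    (hsum2 : (q - q⁻¹) + g₃ + g₄ + α * (g₃ * g₄) = 0)
    (K L : Matrix (Fin N) (Fin N) A)
    (hgRE : emb (R + g₁ • (1 : Matrix (Fin N × Fin N) (Fin N × Fin N) ℂ)) * leg1 K *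
        emb (R + g₂ • (1 : Matrix (Fin N × Fin N) (Fin N × Fin N) ℂ)) * leg1 L =
      leg1 L * emb (R + g₃ • (1 : Matrix (Fin N × Fin N) (Fin N × Fin N) ℂ)) * leg1 K *
        emb (R + g₄ • (1 : Matrix (Fin N × Fin N) (Fin N × Fin N) ℂ))) :
    trR C K • L = L * (trR C K • (1 : Matrix (Fin N) (Fin N) A)) := by
  have hinv := Matrix.inv_eq_sub_smul_one_of_hecke hq0 hHecke
  have hsandwich : ∀ g h : ℂ, (q - q⁻¹) + g + h + α * (g * h) = 0 →
      trR2 C (emb (R + g • 1) * leg1 K * emb (R + h • 1)) = trR C K • 1 := by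
    intro g h hgh
    rw [trR2_emb_add_smul_mul_leg1_mul_emb_add_smul hi hinv hiii1, hii, hgh, zero_smul, add_zero]
  have htraced := congrArg (trR2 C) hgRE
  rw [trR2_mul_leg1, hsandwich g₁ g₂ hsum1, mul_assoc (leg1 L), mul_assoc (leg1 L),
    trR2_leg1_mul, hsandwich g₃ g₄ hsum2, smul_mul_assoc, one_mul] at htraced
  exact htraced

/-- if `(q−q⁻¹)+g₁+g₂+α g₁g₂ = 0` and `(q−q⁻¹)+g₃+g₄+α g₃g₄ = 0`, then the
generalized reflection equation `(R+g₁I)K₁(R+g₂I)L₁ = L₁(R+g₃I)K₁(R+g₄I)` implies that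
`Tr_R K` commutes with `L`. -/
theorem first_power_sum_central_of_sum_conditions {N : ℕ} {A : Type*} [Ring A] [Algebra ℂ A]
    (q : ℂ) (hq0 : q ≠ 0) (hq1 : q ≠ 1) (hqm1 : q ≠ -1)
    (R : Matrix (Fin N × Fin N) (Fin N × Fin N) ℂ)
    (hRinv : IsUnit R)
    (hbraid : op12 R * op23 R * op12 R = op23 R * op12 R * op23 R)
    (hHecke : (R - q • (1 : Matrix (Fin N × Fin N) (Fin N × Fin N) ℂ)) *
      (R + q⁻¹ • (1 : Matrix (Fin N × Fin N) (Fin N × Fin N) ℂ)) = 0)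
    (C : Matrix (Fin N) (Fin N) ℂ) (α : ℂ)
    (hi : trR2 C R = (1 : Matrix (Fin N) (Fin N) ℂ))
    (hii : trR C (1 : Matrix (Fin N) (Fin N) ℂ) = α)
    (hiii1 : ∀ X : Matrix (Fin N) (Fin N) A,
      trR2 C (emb R * leg1 X * emb R⁻¹) = trR C X • (1 : Matrix (Fin N) (Fin N) A))
    (hiii2 : ∀ X : Matrix (Fin N) (Fin N) A,
      trR2 C (emb R⁻¹ * leg1 X * emb R) = trR C X • (1 : Matrix (Fin N) (Fin N) A))
    (g₁ g₂ g₃ g₄ : ℂ)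
    (hsum1 : (q - q⁻¹) + g₁ + g₂ + α * (g₁ * g₂) = 0)
    (hsum2 : (q - q⁻¹) + g₃ + g₄ + α * (g₃ * g₄) = 0)
    (K L : Matrix (Fin N) (Fin N) A)
    (hgRE : emb (R + g₁ • (1 : Matrix (Fin N × Fin N) (Fin N × Fin N) ℂ)) * leg1 K *
        emb (R + g₂ • (1 : Matrix (Fin N × Fin N) (Fin N × Fin N) ℂ)) * leg1 L =
      leg1 L * emb (R + g₃ • (1 : Matrix (Fin N × Fin N) (Fin N × Fin N) ℂ)) * leg1 K *
        emb (R + g₄ • (1 : Matrix (Fin N × Fin N) (Fin N × Fin N) ℂ))) :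
    trR C K • L = L * (trR C K • (1 : Matrix (Fin N) (Fin N) A)) :=
  first_power_sum_central_of_sum_conditions_general q hq0 R hHecke C α hi hii hiii1 g₁ g₂ g₃ g₄
    hsum1 hsum2 K L hgRE
end

section
/- Fix q ∈ ℂ \ {0,1,−1}, nonnegative integers m, n, and set λ = q − q⁻¹, α = q^{n−m}·(q^{m−n} − q^{n−m})/(q − q⁻¹), and f(x) = −(q−q⁻¹)x/(x−1) for x ≠ 1. Let c ∈ ℂ, c ≠ 0. Then the identity λ + f(u/v) + f(vc/u) + α·f(u/v)·f(vc/u) = 0 holds for all u, v ∈ ℂ \ {0} with u ≠ v and u ≠ cv, if and only if c = q^{2(m−n)}. -/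
/-- The shift function of the Baxterized trigonometric `R`-matrix:
`f(x) = −(q−q⁻¹)x/(x−1)`. -/
noncomputable def fshift (q x : ℂ) : ℂ := -(q - q⁻¹) * x / (x - 1)

/-- `α = q^{n−m}·(m−n)_q = q^{n−m}·(q^{m−n} − q^{n−m})/(q − q⁻¹)`, the `R`-trace of the
identity for a Hecke symmetry of bi-rank `(m|n)`. -/
noncomputable def alphaHecke (q : ℂ) (m n : ℕ) : ℂ :=
  q ^ ((n : ℤ) - m) * (q ^ ((m : ℤ) - n) - q ^ ((n : ℤ) - m)) / (q - q⁻¹)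

/-! With `λ = q − q⁻¹` and `α = (1 − q^{2(n−m)})/λ`, clearing denominators turns
`λ + f(x) + f(y) + α f(x) f(y)` into `λ (1 − q^{2(n−m)} x y) / ((x − 1)(y − 1))`.
For `x = u/v`, `y = vc/u` the product `xy` is the charge `c`, so the expression vanishes
exactly when `q^{2(n−m)} c = 1`. -/

lemma sub_inv_ne_zero {q : ℂ} (hq0 : q ≠ 0) (hq1 : q ≠ 1) (hqm1 : q ≠ -1) : q - q⁻¹ ≠ 0 := by
  intro h
  have hsq : q * q = 1 := by
    rw [sub_eq_zero] at h
    nth_rewrite 1 [h]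
    exact inv_mul_cancel₀ hq0
  rcases mul_self_eq_one_iff.mp hsq with h1 | h1
  exacts [hq1 h1, hqm1 h1]

lemma alphaHecke_eq {q : ℂ} (hq0 : q ≠ 0) (m n : ℕ) :
    alphaHecke q m n = (1 - q ^ (2 * ((n : ℤ) - m))) / (q - q⁻¹) := by
  rw [alphaHecke, mul_sub, ← zpow_add₀ hq0, ← zpow_add₀ hq0, sub_add_sub_cancel', sub_self,
    zpow_zero, ← two_mul]

lemma add_fshift_add_fshift_add_mul_fshift (q a : ℂ) {x y : ℂ}
    (hx : x ≠ 1) (hy : y ≠ 1) :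
    (q - q⁻¹) + fshift q x + fshift q y + (1 - a) / (q - q⁻¹) * fshift q x * fshift q y
      = (q - q⁻¹) * (1 - a * (x * y)) / ((x - 1) * (y - 1)) := by
  have hx1 : x - 1 ≠ 0 := sub_ne_zero.mpr hx
  have hy1 : y - 1 ≠ 0 := sub_ne_zero.mpr hy
  unfold fshift
  field_simp
  ring

lemma centrality_eq_zero_iff {q : ℂ} (hq0 : q ≠ 0) (hq1 : q ≠ 1) (hqm1 : q ≠ -1) (m n : ℕ)
    {x y : ℂ} (hx : x ≠ 1) (hy : y ≠ 1) :
    (q - q⁻¹) + fshift q x + fshift q y + alphaHecke q m n * fshift q x * fshift q y = 0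
      ↔ x * y = q ^ (2 * ((m : ℤ) - n)) := by
  have hl := sub_inv_ne_zero hq0 hq1 hqm1
  have hden : (x - 1) * (y - 1) ≠ 0 := mul_ne_zero (sub_ne_zero.mpr hx) (sub_ne_zero.mpr hy)
  have hinv : q ^ (2 * ((n : ℤ) - m)) = (q ^ (2 * ((m : ℤ) - n)))⁻¹ := by
    rw [← zpow_neg]; ring_nf
  rw [alphaHecke_eq hq0, add_fshift_add_fshift_add_mul_fshift q _ hx hy, div_eq_zero_iff,
    or_iff_left hden, mul_eq_zero, or_iff_right hl, sub_eq_zero, hinv,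
    eq_comm, inv_mul_eq_one₀ (zpow_ne_zero _ hq0), eq_comm]

theorem critical_charge_iff_general (q : ℂ) (hq0 : q ≠ 0) (hq1 : q ≠ 1) (hqm1 : q ≠ -1)
    (m n : ℕ) (c : ℂ) :
    (∀ u v : ℂ, u ≠ 0 → v ≠ 0 → u ≠ v → u ≠ c * v →
      (q - q⁻¹) + fshift q (u / v) + fshift q (v * c / u) +
        alphaHecke q m n * fshift q (u / v) * fshift q (v * c / u) = 0)
    ↔ c = q ^ (2 * ((m : ℤ) - n)) := by
  constructor
  · intro H
    obtain ⟨u, hu⟩ := Infinite.exists_notMem_finset ({0, 1, c} : Finset ℂ)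
    simp only [Finset.mem_insert, Finset.mem_singleton, not_or] at hu
    obtain ⟨hu0, hu1, huc⟩ := hu
    have hcu : c / u ≠ 1 := fun h => huc ((div_eq_one_iff_eq hu0).mp h).symm
    have hcentral := H u 1 hu0 one_ne_zero hu1 (by rwa [mul_one])
    rwa [div_one, one_mul, centrality_eq_zero_iff hq0 hq1 hqm1 m n hu1 hcu,
      mul_div_cancel₀ c hu0] at hcentral
  · intro hcrit u v hu hv huv hucv
    have hx : u / v ≠ 1 := fun h => huv ((div_eq_one_iff_eq hv).mp h)
    have hy : v * c / u ≠ 1 := fun h => hucv (by rw [← (div_eq_one_iff_eq hu).mp h, mul_comm])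
    rw [centrality_eq_zero_iff hq0 hq1 hqm1 m n hx hy, ← hcrit]
    field_simp

/-- the centrality condition
`λ + f(u/v) + f(vc/u) + α·f(u/v)·f(vc/u) = 0` holds for all admissible `u, v`
iff the charge is critical: `c = q^{2(m−n)}`. -/
theorem critical_charge_iff (q : ℂ) (hq0 : q ≠ 0) (hq1 : q ≠ 1) (hqm1 : q ≠ -1)
    (m n : ℕ) (c : ℂ) (hc : c ≠ 0) :
    (∀ u v : ℂ, u ≠ 0 → v ≠ 0 → u ≠ v → u ≠ c * v →
      (q - q⁻¹) + fshift q (u / v) + fshift q (v * c / u) +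
        alphaHecke q m n * fshift q (u / v) * fshift q (v * c / u) = 0)
    ↔ c = q ^ (2 * ((m : ℤ) - n)) :=
  critical_charge_iff_general q hq0 hq1 hqm1 m n c
end
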